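/- In the infinite-armed deterministic bandit with arm rewards θ_a i.i.d. uniform on [0,1], satisficing Thompson sampling with tolerance ε — which samples fresh arms until the first arm with θ_a ≥ 1-ε is found and then plays it forever — has expected discounted regret E[∑_{t=0}^∞ α^t (1 - θ_{A_t})] ≤ 1/(2ε) + ε/(2(1-α)). In particular, with ε = √(1-α) the expected discounted regret is at most 1/√(1-α). -/

import Mathlib

/-!
At time `t` the algorithm either is still exploring (`t < τ`) and plays arm `t`, or has committed
to arm `τ = s ≤ t`. Both events are "the first `s` arms miss `[1-ε, 1]`" intersected with an event
about arm `s` alone, so independence factorizes each contribution, giving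
`E[1 - θ_{A_t}] = (1-ε)^(t+1)/2 + ε/2`. Discounting and summing the geometric series gives
`(1-ε)/(2(1-α(1-ε))) + ε/(2(1-α))`, and `(1-ε)(α+ε) ≤ 1` bounds the first term by `1/(2ε)`.
-/

open MeasureTheory ProbabilityTheory

lemma Nat.apply_ite_lt_sInf {M : Type*} [AddCommMonoid M] (S : Set ℕ) (f : ℕ → M)
    (t : ℕ) :
    f (if t < sInf S then t else sInf S)
      = (if t < sInf S then f t else 0)
        + ∑ s ∈ Finset.range (t + 1), if s = sInf S then f s else 0 := by
  split_ifs with h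
  · have hne (s : ℕ) (hs : s ∈ Finset.range (t + 1)) : s ≠ sInf S :=
      ((Nat.lt_succ_iff.1 (Finset.mem_range.1 hs)).trans_lt h).ne
    rw [Finset.sum_eq_zero fun s hs => if_neg (hne s hs), add_zero]
  · rw [zero_add, Finset.sum_ite_eq', if_pos (Finset.mem_range.2 (Nat.lt_succ_of_le (not_lt.1 h)))]

lemma Nat.lt_sInf_iff_of_nonempty {S : Set ℕ} (hS : S.Nonempty) {t : ℕ} :
    t < sInf S ↔ (∀ a < t, a ∉ S) ∧ t ∉ S := by
  refine ⟨fun h => ⟨fun a ha => Nat.notMem_of_lt_sInf (ha.trans h), Nat.notMem_of_lt_sInf h⟩,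
    fun ⟨hlt, ht⟩ => not_le.1 fun hle => ?_⟩
  obtain hlt' | heq := hle.lt_or_eq
  · exact hlt _ hlt' (Nat.sInf_mem hS)
  · exact ht (heq ▸ Nat.sInf_mem hS)

lemma Nat.eq_sInf_iff_of_nonempty {S : Set ℕ} (hS : S.Nonempty) {s : ℕ} :
    s = sInf S ↔ (∀ a < s, a ∉ S) ∧ s ∈ S := by
  refine ⟨?_, fun ⟨hlt, hs⟩ => le_antisymm ?_ (Nat.sInf_le hs)⟩
  · rintro rfl
    exact ⟨fun a ha => Nat.notMem_of_lt_sInf ha, Nat.sInf_mem hS⟩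
  · exact not_lt.1 fun h => hlt _ h (Nat.sInf_mem hS)

section IIDSequence

variable {Ω : Type*} [MeasurableSpace Ω] {μ : Measure Ω} {X : ℕ → Ω → ℝ} {ν : Measure ℝ}
  {B : Set ℝ} {τ : Ω → ℕ}

lemma measure_forall_lt_mem (hind : iIndepFun X μ) (hX : ∀ a, Measurable (X a))
    (hlaw : ∀ a, μ.map (X a) = ν) (hB : MeasurableSet B) (s : ℕ) :
    μ {ω | ∀ a < s, X a ω ∈ B} = ν B ^ s := by
  have hD : {ω | ∀ a < s, X a ω ∈ B} = ⋂ a ∈ Finset.range s, X a ⁻¹' B := by ext; simp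
  rw [hD, hind.meas_biInter fun a _ => ⟨B, hB, rfl⟩,
    Finset.prod_congr rfl fun a _ => by rw [← Measure.map_apply (hX a) hB, hlaw],
    Finset.prod_const, Finset.card_range]

lemma measure_forall_mem_eq_zero (hind : iIndepFun X μ) (hX : ∀ a, Measurable (X a))
    (hlaw : ∀ a, μ.map (X a) = ν) (hB : MeasurableSet B) (hνB : ν B < 1) :
    μ {ω | ∀ a, X a ω ∈ B} = 0 := by
  refine le_antisymm (ge_of_tendsto' (ENNReal.tendsto_pow_atTop_nhds_zero_of_lt_one hνB)
    fun s => ?_) zero_le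
  rw [← measure_forall_lt_mem hind hX hlaw hB s]
  exact measure_mono fun ω hω a _ => hω a

lemma setIntegral_forall_lt_mem (hind : iIndepFun X μ) (hX : ∀ a, Measurable (X a))
    (hlaw : ∀ a, μ.map (X a) = ν) (hB : MeasurableSet B) {g : ℝ → ℝ}
    (hg : AEStronglyMeasurable g ν) (s : ℕ) :
    ∫ ω in {ω | ∀ a < s, X a ω ∈ B}, g (X s ω) ∂μ = ν.real B ^ s * ∫ x, g x ∂ν := by
  have hindep : Indep (⨆ a ∈ Set.Iio s, MeasurableSpace.comap (X a) inferInstance)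
      (MeasurableSpace.comap (X s) inferInstance) μ := by
    simpa using indep_iSup_of_disjoint (fun a => (hX a).comap_le) hind.iIndep
      (Set.disjoint_singleton_right.2 (lt_irrefl s) : Disjoint (Set.Iio s) {s})
  have hD : MeasurableSet[⨆ a ∈ Set.Iio s, MeasurableSpace.comap (X a) inferInstance]
      {ω | ∀ a < s, X a ω ∈ B} := by
    have hset : {ω | ∀ a < s, X a ω ∈ B} = ⋂ a ∈ Set.Iio s, X a ⁻¹' B := by ext; simp
    rw [hset]
    exact .biInter (Set.to_countable _) fun a ha =>
      le_iSup₂ (f := fun a _ => MeasurableSpace.comap (X a) inferInstance) a ha _ ⟨B, hB, rfl⟩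
  rw [hindep.setIntegral_eq_mul (iSup₂_le fun a _ => (hX a).comap_le) (hX s).aemeasurable hD
    (by rwa [hlaw]), measureReal_def, measure_forall_lt_mem hind hX hlaw hB,
    ← integral_map (hX s).aemeasurable (by rwa [hlaw]), hlaw]
  simp [measureReal_def]

lemma setIntegral_forall_lt_mem_and_mem (hind : iIndepFun X μ) (hX : ∀ a, Measurable (X a))
    (hlaw : ∀ a, μ.map (X a) = ν) (hB : MeasurableSet B) {C : Set ℝ} (hC : MeasurableSet C)
    {g : ℝ → ℝ} (hg : AEStronglyMeasurable g ν) (s : ℕ) :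
    ∫ ω in {ω | (∀ a < s, X a ω ∈ B) ∧ X s ω ∈ C}, g (X s ω) ∂μ
      = ν.real B ^ s * ∫ x in C, g x ∂ν := by
  change ∫ ω in {ω | ∀ a < s, X a ω ∈ B} ∩ X s ⁻¹' C, g (X s ω) ∂μ = _
  rw [← setIntegral_indicator ((hX s) hC)]
  simp_rw [← Function.comp_apply (f := g), Set.indicator_comp_right]
  rw [setIntegral_forall_lt_mem hind hX hlaw hB (hg.indicator hC), integral_indicator hC]

lemma ae_comp_ite_lt_eq (hind : iIndepFun X μ) (hX : ∀ a, Measurable (X a))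
    (hlaw : ∀ a, μ.map (X a) = ν) (hB : MeasurableSet B) (hνB : ν B < 1)
    (hτ : ∀ ω, τ ω = sInf {a | X a ω ∉ B}) (r : ℝ → ℝ) (t : ℕ) :
    ∀ᵐ ω ∂μ, r (X (if t < τ ω then t else τ ω) ω)
      = {ω | (∀ a < t, X a ω ∈ B) ∧ X t ω ∈ B}.indicator (fun ω => r (X t ω)) ω
        + ∑ s ∈ Finset.range (t + 1),
            {ω | (∀ a < s, X a ω ∈ B) ∧ X s ω ∈ Bᶜ}.indicator (fun ω => r (X s ω)) ω := by
  classical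
  -- `τ` is the first success time only off this null event, since `sInf ∅ = 0`
  have hsucceeds : ∀ᵐ ω ∂μ, ∃ a, X a ω ∉ B := by
    rw [ae_iff]
    simpa only [not_exists, not_not] using measure_forall_mem_eq_zero hind hX hlaw hB hνB
  filter_upwards [hsucceeds] with ω hω
  have hS : {a | X a ω ∉ B}.Nonempty := hω
  rw [hτ, Nat.apply_ite_lt_sInf _ fun a => r (X a ω)]
  congr 1
  · rw [Set.indicator_apply]
    refine if_congr ?_ rfl rfl
    rw [Nat.lt_sInf_iff_of_nonempty hS]
    simp only [Set.mem_ofPred_eq, not_not]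
  · refine Finset.sum_congr rfl fun s _ => ?_
    rw [Set.indicator_apply]
    refine if_congr ?_ rfl rfl
    rw [Nat.eq_sInf_iff_of_nonempty hS]
    simp only [Set.mem_ofPred_eq, Set.mem_compl_iff, not_not]

lemma integral_comp_ite_lt_eq (hind : iIndepFun X μ) (hX : ∀ a, Measurable (X a))
    (hlaw : ∀ a, μ.map (X a) = ν) (hB : MeasurableSet B) (hνB : ν B < 1)
    (hτ : ∀ ω, τ ω = sInf {a | X a ω ∉ B}) {r : ℝ → ℝ} (hr : Integrable r ν) (t : ℕ) :
    ∫ ω, r (X (if t < τ ω then t else τ ω) ω) ∂μ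
      = ν.real B ^ t * ∫ x in B, r x ∂ν
        + ∑ s ∈ Finset.range (t + 1), ν.real B ^ s * ∫ x in Bᶜ, r x ∂ν := by
  have hrX (s : ℕ) : Integrable (fun ω => r (X s ω)) μ :=
    (hlaw s ▸ hr).comp_measurable (hX s)
  have hmeas (s : ℕ) {C : Set ℝ} (hC : MeasurableSet C) :
      MeasurableSet {ω | (∀ a < s, X a ω ∈ B) ∧ X s ω ∈ C} := by
    measurability
  rw [integral_congr_ae (ae_comp_ite_lt_eq hind hX hlaw hB hνB hτ r t),
    integral_add ((hrX t).indicator (hmeas t hB))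
      (integrable_finsetSum _ fun s _ => (hrX s).indicator (hmeas s hB.compl)),
    integral_finsetSum _ fun s _ => (hrX s).indicator (hmeas s hB.compl)]
  simp_rw [integral_indicator (hmeas _ hB), integral_indicator (hmeas _ hB.compl),
    setIntegral_forall_lt_mem_and_mem hind hX hlaw hB hB hr.aestronglyMeasurable,
    setIntegral_forall_lt_mem_and_mem hind hX hlaw hB hB.compl hr.aestronglyMeasurable]

end IIDSequence

lemma Set.Iio_inter_Icc_of_le {α : Type*} [LinearOrder α] {a b c : α} (h : b ≤ c) :
    Set.Iio b ∩ Set.Icc a c = Set.Ico a b := by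
  ext x
  simp only [Set.mem_inter_iff, Set.mem_Iio, Set.mem_Icc, Set.mem_Ico]
  exact ⟨fun ⟨hb, ha, _⟩ => ⟨ha, hb⟩, fun ⟨ha, hb⟩ => ⟨hb, ha, hb.le.trans h⟩⟩

lemma Set.Ici_inter_Icc_of_le {α : Type*} [LinearOrder α] {a b c : α} (h : a ≤ b) :
    Set.Ici b ∩ Set.Icc a c = Set.Icc b c := by
  ext x
  simp only [Set.mem_inter_iff, Set.mem_Ici, Set.mem_Icc]
  exact ⟨fun ⟨hb, _, hc⟩ => ⟨hb, hc⟩, fun ⟨hb, hc⟩ => ⟨hb, h.trans hb, hc⟩⟩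

section Uniform

variable {Ω : Type*} [MeasurableSpace Ω] {μ : Measure Ω} {X : ℕ → Ω → ℝ} {τ : Ω → ℕ}

lemma uniform_Icc_apply_Iio {c : ℝ} (hc : c ≤ 1) :
    volume.restrict (Set.Icc (0 : ℝ) 1) (Set.Iio c) = ENNReal.ofReal c := by
  rw [Measure.restrict_apply measurableSet_Iio, Set.Iio_inter_Icc_of_le hc, Real.volume_Ico,
    sub_zero]

lemma setIntegral_uniform_Icc_Iio_one_sub {c : ℝ} (hc0 : 0 ≤ c) (hc1 : c ≤ 1) :
    ∫ x in Set.Iio c, (1 - x) ∂volume.restrict (Set.Icc 0 1) = c - c ^ 2 / 2 := by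
  rw [Measure.restrict_restrict measurableSet_Iio, Set.Iio_inter_Icc_of_le hc1,
    integral_Ico_eq_integral_Ioo, ← integral_Ioc_eq_integral_Ioo,
    ← intervalIntegral.integral_of_le hc0,
    intervalIntegral.integral_sub intervalIntegrable_const intervalIntegral.intervalIntegrable_id]
  simp

lemma setIntegral_uniform_Icc_compl_Iio_one_sub {c : ℝ} (hc0 : 0 ≤ c) (hc1 : c ≤ 1) :
    ∫ x in (Set.Iio c)ᶜ, (1 - x) ∂volume.restrict (Set.Icc 0 1) = (1 - c) ^ 2 / 2 := by
  rw [Set.compl_Iio, Measure.restrict_restrict measurableSet_Ici, Set.Ici_inter_Icc_of_le hc0,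
    integral_Icc_eq_integral_Ioc, ← intervalIntegral.integral_of_le hc1,
    intervalIntegral.integral_sub intervalIntegrable_const intervalIntegral.intervalIntegrable_id]
  simp
  ring

lemma integral_one_sub_comp_ite_lt_eq (hind : iIndepFun X μ) (hX : ∀ a, Measurable (X a))
    (hunif : ∀ a, μ.map (X a) = volume.restrict (Set.Icc 0 1)) {ε : ℝ} (hε : ε ∈ Set.Ioo 0 1)
    (hτ : ∀ ω, τ ω = sInf {a | 1 - ε ≤ X a ω}) (t : ℕ) :
    ∫ ω, (1 - X (if t < τ ω then t else τ ω) ω) ∂μ = (1 - ε) ^ (t + 1) / 2 + ε / 2 := by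
  obtain ⟨hε0, hε1⟩ := hε
  have hν := uniform_Icc_apply_Iio (c := 1 - ε) (by linarith)
  have hνB : volume.restrict (Set.Icc (0 : ℝ) 1) (Set.Iio (1 - ε)) < 1 := by
    rw [hν]
    exact ENNReal.ofReal_lt_one.2 (by linarith)
  have hνreal : (volume.restrict (Set.Icc (0 : ℝ) 1)).real (Set.Iio (1 - ε)) = 1 - ε := by
    rw [measureReal_def, hν, ENNReal.toReal_ofReal (by linarith)]
  have hr : Integrable (fun x : ℝ => 1 - x) (volume.restrict (Set.Icc 0 1)) :=
    (continuous_const.sub continuous_id).integrableOn_Icc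
  rw [integral_comp_ite_lt_eq (r := fun x => 1 - x) hind hX hunif measurableSet_Iio hνB
      (fun ω => by simp only [hτ, Set.mem_Iio, not_lt]) hr t, hνreal,
    setIntegral_uniform_Icc_Iio_one_sub (by linarith) (by linarith),
    setIntegral_uniform_Icc_compl_Iio_one_sub (by linarith) (by linarith), ← Finset.sum_mul,
    geom_sum_eq (by linarith), sub_sub_cancel_left]
  field_simp
  ring

end Uniform

lemma hasSum_pow_mul_pow_succ_div_two_add {α c d : ℝ} (hα0 : 0 ≤ α) (hα1 : α < 1) (hc0 : 0 ≤ c)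
    (hc1 : c ≤ 1) :
    HasSum (fun t : ℕ => α ^ t * (c ^ (t + 1) / 2 + d / 2))
      (c / (2 * (1 - α * c)) + d / (2 * (1 - α))) := by
  have hαc : α * c < 1 := by nlinarith
  rw [div_mul_eq_div_mul_one_div, div_mul_eq_div_mul_one_div d, one_div, one_div]
  refine (((hasSum_geometric_of_lt_one (mul_nonneg hα0 hc0) hαc).mul_left (c / 2)).add
    ((hasSum_geometric_of_lt_one hα0 hα1).mul_left (d / 2))).congr_fun fun t => ?_
  rw [mul_pow]
  ring

lemma one_sub_div_two_mul_one_sub_mul_le {α ε : ℝ} (hα : α ≤ 1) (hε0 : 0 < ε) (hε1 : ε ≤ 1) :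
    (1 - ε) / (2 * (1 - α * (1 - ε))) ≤ 1 / (2 * ε) := by
  have hpos : 0 < 1 - α * (1 - ε) := by nlinarith
  rw [div_le_div_iff₀ (by positivity) (by positivity)]
  nlinarith

lemma one_div_two_mul_sqrt_add_sqrt_div {x : ℝ} (hx : 0 < x) :
    1 / (2 * √x) + √x / (2 * x) = 1 / √x := by
  have hsqrt := Real.sqrt_pos.2 hx
  have hsq := Real.sq_sqrt hx.le
  field_simp
  nlinarith

theorem stmt4_general {Ω : Type*} [MeasurableSpace Ω] (μ : Measure Ω)
    (θ : ℕ → Ω → ℝ) (hmeas : ∀ a, Measurable (θ a))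
    (hiid : iIndepFun θ μ)
    (hunif : ∀ a : ℕ, Measure.map (θ a) μ = volume.restrict (Set.Icc (0:ℝ) 1))
    (α ε : ℝ) (hα : α ∈ Set.Ioo (0:ℝ) 1) (hε : ε ∈ Set.Ioo (0:ℝ) 1)
    (τ : Ω → ℕ) (hτ : ∀ ω, τ ω = sInf {a : ℕ | 1 - ε ≤ θ a ω})
    (A : ℕ → Ω → ℕ) (hA : ∀ t ω, A t ω = if t < τ ω then t else τ ω) :
    (∑' t : ℕ, α ^ t * ∫ ω, (1 - θ (A t ω) ω) ∂μ) ≤ 1 / (2 * ε) + ε / (2 * (1 - α)) ∧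
    (ε = Real.sqrt (1 - α) →
      (∑' t : ℕ, α ^ t * ∫ ω, (1 - θ (A t ω) ω) ∂μ) ≤ 1 / Real.sqrt (1 - α)) := by
  obtain ⟨hα0, hα1⟩ := hα
  have hregret (t : ℕ) : ∫ ω, (1 - θ (A t ω) ω) ∂μ = (1 - ε) ^ (t + 1) / 2 + ε / 2 := by
    simp only [hA]
    exact integral_one_sub_comp_ite_lt_eq hiid hmeas hunif hε hτ t
  have hbound : (∑' t : ℕ, α ^ t * ∫ ω, (1 - θ (A t ω) ω) ∂μ)
      ≤ 1 / (2 * ε) + ε / (2 * (1 - α)) := by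
    simp only [hregret]
    rw [(hasSum_pow_mul_pow_succ_div_two_add hα0.le hα1 (by linarith [hε.2])
      (by linarith [hε.1])).tsum_eq]
    exact add_le_add_left (one_sub_div_two_mul_one_sub_mul_le hα1.le hε.1 hε.2.le) _
  refine ⟨hbound, fun hεα => hbound.trans_eq ?_⟩
  rw [hεα]
  exact one_div_two_mul_sqrt_add_sqrt_div (by linarith)

/-- Satisficing Thompson sampling with tolerance `ε` in the infinite-armed
deterministic bandit with i.i.d. Uniform[0,1] arm rewards: sample fresh arms in
order until the first arm with `θ_a ≥ 1-ε` is found (at time `τ`), then play it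
forever. The expected discounted regret is at most `1/(2ε) + ε/(2(1-α))`;
in particular, for `ε = √(1-α)` it is at most `1/√(1-α)`. -/
theorem stmt4 {Ω : Type*} [MeasurableSpace Ω] (μ : Measure Ω) [IsProbabilityMeasure μ]
    (θ : ℕ → Ω → ℝ) (hmeas : ∀ a, Measurable (θ a))
    (hiid : iIndepFun θ μ)
    (hunif : ∀ a : ℕ, Measure.map (θ a) μ = volume.restrict (Set.Icc (0:ℝ) 1))
    (α ε : ℝ) (hα : α ∈ Set.Ioo (0:ℝ) 1) (hε : ε ∈ Set.Ioo (0:ℝ) 1)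
    (τ : Ω → ℕ) (hτ : ∀ ω, τ ω = sInf {a : ℕ | 1 - ε ≤ θ a ω})
    (A : ℕ → Ω → ℕ) (hA : ∀ t ω, A t ω = if t < τ ω then t else τ ω) :
    (∑' t : ℕ, α ^ t * ∫ ω, (1 - θ (A t ω) ω) ∂μ) ≤ 1 / (2 * ε) + ε / (2 * (1 - α)) ∧
    (ε = Real.sqrt (1 - α) →
      (∑' t : ℕ, α ^ t * ∫ ω, (1 - θ (A t ω) ω) ∂μ) ≤ 1 / Real.sqrt (1 - α)) :=
  stmt4_general μ θ hmeas hiid hunif α ε hα hε τ hτ A hA
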